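/- arXiv:1904.11543 — 5 statements merged into one kernel-verified Lean document; each statement's English description precedes it below -/
import Mathlib

section
/- Let λ, μ be dominant coweights, w, v Weyl group elements, and suppose ν := v(−λ − wμ) is dominant. Then ∑_{α∈Φ} max(0, ⟨α,λ⟩, ⟨α, λ+wμ⟩) = ⟨ρ, λ + μ + ν⟩, where the sum runs over all roots α. -/
set_option linter.unnecessarySimpa false

lemma max_key_aux (a c : ℚ) :
    max 0 (max a (a + c)) + max 0 (max (-a) (-a + -c)) = (|a| + |c| + |a + c|) / 2 := by
  rcases abs_cases a with ⟨h1, h1'⟩ | ⟨h1, h1'⟩ <;>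
  rcases abs_cases c with ⟨h2, h2'⟩ | ⟨h2, h2'⟩ <;>
  rcases abs_cases (a + c) with ⟨h3, h3'⟩ | ⟨h3, h3'⟩ <;>
  rw [h1, h2, h3] <;>
  simp only [max_def] <;> split_ifs <;> linarith

lemma sum_abs_eq_aux (V : Type*) [AddCommGroup V] [Module ℚ V]
    (Φpos : Finset V)
    (hdisj : ∀ α ∈ Φpos, -α ∉ Φpos)
    (u : V ≃ₗ[ℚ] V)
    (hu : ∀ α ∈ Φpos, u α ∈ Φpos ∨ -(u α) ∈ Φpos)
    (hu' : ∀ α ∈ Φpos, u.symm α ∈ Φpos ∨ -(u.symm α) ∈ Φpos)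
    (f : Module.Dual ℚ V) (hf : ∀ α ∈ Φpos, 0 ≤ f α) :
    ∑ α ∈ Φpos, |f (u α)| = ∑ α ∈ Φpos, f α := by
  classical
  refine Finset.sum_nbij' (fun α => if u α ∈ Φpos then u α else -(u α))
    (fun β => if u.symm β ∈ Φpos then u.symm β else -(u.symm β)) ?_ ?_ ?_ ?_ ?_
  · intro α hα
    by_cases h : u α ∈ Φpos
    · simpa [h] using h
    · rcases hu α hα with h' | h'
      · exact absurd h' h
      · simpa [h] using h'
  · intro β hβ
    by_cases h : u.symm β ∈ Φpos
    · simpa [h] using h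
    · rcases hu' β hβ with h' | h'
      · exact absurd h' h
      · simpa [h] using h'
  · intro α hα
    by_cases h : u α ∈ Φpos
    · simp [h, hα]
    · simp [h, hdisj α hα, map_neg]
  · intro β hβ
    by_cases h : u.symm β ∈ Φpos
    · simp [h, hβ]
    · simp [h, hdisj β hβ, map_neg]
  · intro α hα
    by_cases h : u α ∈ Φpos
    · simp [h, abs_of_nonneg (hf _ h)]
    · rcases hu α hα with h' | h'
      · exact absurd h' h
      · have h0 : 0 ≤ f (-(u α)) := hf _ h'
        rw [map_neg] at h0
        simp [h, abs_of_nonpos (by linarith : f (u α) ≤ 0), map_neg]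

/-- Let `λ, μ` be dominant coweights (functionals), `w, v` Weyl group elements, and
suppose `ν := v(−λ − wμ)` (i.e. `ν(α) = −λ(v⁻¹α) − μ(w⁻¹v⁻¹α)`) is dominant.  Then
`∑_{α ∈ Φ} max(0, ⟨α,λ⟩, ⟨α, λ+wμ⟩) = ⟨ρ, λ+μ+ν⟩`, where the sum runs over all
roots `Φ = Φ⁺ ∪ (−Φ⁺)`. -/
theorem stmt_3 (V : Type*) [AddCommGroup V] [Module ℚ V]
    (Φpos : Finset V)
    (hdisj : ∀ α ∈ Φpos, -α ∉ Φpos)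
    (ρ : V) (hρ : (2 : ℚ) • ρ = ∑ α ∈ Φpos, α)
    (w v : V ≃ₗ[ℚ] V)
    (hw : ∀ α ∈ Φpos, w α ∈ Φpos ∨ -(w α) ∈ Φpos)
    (hw' : ∀ α ∈ Φpos, w.symm α ∈ Φpos ∨ -(w.symm α) ∈ Φpos)
    (hv : ∀ α ∈ Φpos, v α ∈ Φpos ∨ -(v α) ∈ Φpos)
    (hv' : ∀ α ∈ Φpos, v.symm α ∈ Φpos ∨ -(v.symm α) ∈ Φpos)
    (lam mu nu : Module.Dual ℚ V)
    (hlam : ∀ α ∈ Φpos, 0 ≤ lam α)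
    (hmu : ∀ α ∈ Φpos, 0 ≤ mu α)
    (hnu : ∀ α ∈ Φpos, 0 ≤ nu α)
    (hnudef : ∀ α : V, nu α = -(lam (v.symm α)) - mu (w.symm (v.symm α))) :
    ∑ α ∈ Φpos,
        (max 0 (max (lam α) (lam α + mu (w.symm α)))
          + max 0 (max (lam (-α)) (lam (-α) + mu (w.symm (-α)))))
      = lam ρ + mu ρ + nu ρ := by
  classical
  have key : ∀ α ∈ Φpos,
      max 0 (max (lam α) (lam α + mu (w.symm α)))
        + max 0 (max (lam (-α)) (lam (-α) + mu (w.symm (-α))))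
      = (|lam α| + |mu (w.symm α)| + |lam α + mu (w.symm α)|) / 2 := by
    intro α _
    have := max_key_aux (lam α) (mu (w.symm α))
    simpa [map_neg] using this
  rw [Finset.sum_congr rfl key]
  have h1 : ∑ α ∈ Φpos, |lam α| = 2 * lam ρ := by
    have h : ∑ α ∈ Φpos, |lam α| = ∑ α ∈ Φpos, lam α :=
      Finset.sum_congr rfl fun α hα => abs_of_nonneg (hlam α hα)
    rw [h, ← map_sum, ← hρ, map_smul]
    simp [smul_eq_mul]
  have h2 : ∑ α ∈ Φpos, |mu (w.symm α)| = 2 * mu ρ := by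
    have hh : ∑ α ∈ Φpos, |mu (w.symm α)| = ∑ α ∈ Φpos, mu α :=
      sum_abs_eq_aux V Φpos hdisj w.symm hw' (by intro α hα; simpa using hw α hα) mu hmu
    rw [hh, ← map_sum, ← hρ, map_smul]
    simp [smul_eq_mul]
  have h3 : ∑ α ∈ Φpos, |lam α + mu (w.symm α)| = 2 * nu ρ := by
    have heq : ∀ α : V, |lam α + mu (w.symm α)| = |nu (v α)| := by
      intro α
      have : nu (v α) = -(lam α + mu (w.symm α)) := by
        rw [hnudef (v α)]; simp; ring
      rw [this, abs_neg]
    have hh : ∑ α ∈ Φpos, |nu (v α)| = ∑ α ∈ Φpos, nu α :=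
      sum_abs_eq_aux V Φpos hdisj v hv hv' nu hnu
    rw [Finset.sum_congr rfl fun α _ => heq α, hh, ← map_sum, ← hρ, map_smul]
    simp [smul_eq_mul]
  calc ∑ α ∈ Φpos, (|lam α| + |mu (w.symm α)| + |lam α + mu (w.symm α)|) / 2
      = ((∑ α ∈ Φpos, |lam α|) + (∑ α ∈ Φpos, |mu (w.symm α)|)
          + ∑ α ∈ Φpos, |lam α + mu (w.symm α)|) / 2 := by
        rw [← Finset.sum_div, Finset.sum_add_distrib, Finset.sum_add_distrib]
    _ = lam ρ + mu ρ + nu ρ := by rw [h1, h2, h3]; ring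
end

section
/- Let λ, μ be dominant coweights, w ∈ W with ν := λ + wμ dominant. Then ∑_{α∈Φ⁺} max(⟨α,λ⟩, ⟨α,λ+wμ⟩) = ⟨2ρ, λ⟩ + ⟨ρ + wρ, wμ⟩. -/
/-- Let `λ, μ` be dominant coweights and `w` a Weyl group element with `ν := λ + wμ`
dominant. Then `∑_{α ∈ Φ⁺} max(⟨α,λ⟩, ⟨α,λ+wμ⟩) = ⟨2ρ, λ⟩ + ⟨ρ + wρ, wμ⟩`. -/
theorem stmt_4 (V : Type*) [AddCommGroup V] [Module ℚ V]
    (Φpos : Finset V)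
    (hdisj : ∀ α ∈ Φpos, -α ∉ Φpos)
    (ρ : V) (hρ : (2 : ℚ) • ρ = ∑ α ∈ Φpos, α)
    (w : V ≃ₗ[ℚ] V)
    (hw : ∀ α ∈ Φpos, w α ∈ Φpos ∨ -(w α) ∈ Φpos)
    (hw' : ∀ α ∈ Φpos, w.symm α ∈ Φpos ∨ -(w.symm α) ∈ Φpos)
    (lam mu : Module.Dual ℚ V)
    (hlam : ∀ α ∈ Φpos, 0 ≤ lam α)
    (hmu : ∀ α ∈ Φpos, 0 ≤ mu α)
    (hnu : ∀ α ∈ Φpos, 0 ≤ lam α + mu (w.symm α)) :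
    ∑ α ∈ Φpos, max (lam α) (lam α + mu (w.symm α))
      = lam ((2 : ℚ) • ρ) + (mu (w.symm ρ) + mu ρ) := by
  classical
  have hbij : ∑ α ∈ Φpos, |mu (w.symm α)| = ∑ β ∈ Φpos, mu β := by
    refine Finset.sum_nbij'
      (i := fun α => if w.symm α ∈ Φpos then w.symm α else -(w.symm α))
      (j := fun β => if w β ∈ Φpos then w β else -(w β)) ?_ ?_ ?_ ?_ ?_
    · intro α hα
      rcases hw' α hα with h | h
      · simp [h]
      · by_cases h2 : w.symm α ∈ Φpos <;> simp [h2, h]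
    · intro β hβ
      rcases hw β hβ with h | h
      · simp [h]
      · by_cases h2 : w β ∈ Φpos <;> simp [h2, h]
    · intro α hα
      by_cases h : w.symm α ∈ Φpos
      · simp [h, hα]
      · have : w (-(w.symm α)) = -α := by simp
        simp [h, this, hdisj α hα]
    · intro β hβ
      by_cases h : w β ∈ Φpos
      · simp [h, hβ]
      · have : w.symm (-(w β)) = -β := by simp
        simp [h, this, hdisj β hβ]
    · intro α hα
      by_cases h : w.symm α ∈ Φpos
      · simp [h, abs_of_nonneg (hmu _ h)]
      · rcases hw' α hα with h' | h'
        · exact absurd h' h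
        · have h0 : 0 ≤ mu (-(w.symm α)) := hmu _ h'
          simp only [map_neg] at h0
          have hle : mu (w.symm α) ≤ 0 := by linarith
          simp [h, abs_of_nonpos hle]
  have hmax : ∀ α ∈ Φpos, max (lam α) (lam α + mu (w.symm α))
      = lam α + (mu (w.symm α) + |mu (w.symm α)|) / 2 := by
    intro α hα
    rcases le_or_gt 0 (mu (w.symm α)) with h | h
    · rw [abs_of_nonneg h, max_eq_right (by linarith)]; ring
    · rw [abs_of_neg h, max_eq_left (by linarith)]; ring
  rw [Finset.sum_congr rfl hmax, Finset.sum_add_distrib]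
  have h1 : ∑ α ∈ Φpos, lam α = lam ((2:ℚ) • ρ) := by rw [hρ, map_sum]
  have h2 : ∑ α ∈ Φpos, mu (w.symm α) = 2 * mu (w.symm ρ) := by
    have : ∑ α ∈ Φpos, mu (w.symm α) = mu (w.symm ((2:ℚ) • ρ)) := by
      rw [hρ, map_sum, map_sum]
    rw [this, map_smul, map_smul]
    simp [two_mul]
  have h3 : ∑ β ∈ Φpos, mu β = 2 * mu ρ := by
    have : ∑ β ∈ Φpos, mu β = mu ((2:ℚ) • ρ) := by rw [hρ, map_sum]
    rw [this, map_smul]; simp [two_mul]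
  rw [h1, ← Finset.sum_div, Finset.sum_add_distrib, h2, hbij, h3]
  ring
end

section
/- Let λ, μ, ν be weights with λ and μ dominant, and u, u′, q, q′, r Weyl group elements such that ν = q(−λ−uμ) = q′(−λ−u′μ). If r ∈ W_λ (the stabilizer of λ) and r′ ∈ W_{−w₀ν} satisfy r q′⁻¹ w₀⁻¹ r′ = q⁻¹ w₀⁻¹, then W_λ u W_μ = W_λ u′ W_μ as double cosets. -/
/-! Applying `r q'⁻¹ w₀⁻¹ r' = q⁻¹ w₀⁻¹` to `w₀ ν`, which `r'` fixes, gives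
`r • q'⁻¹ ν = q⁻¹ ν`, that is `r • (-λ - u'μ) = -λ - uμ`. Since `r` fixes `λ`, this says
`r u' μ = u μ`, so `u ∈ r u' W_μ ⊆ W_λ u' W_μ`. -/

open MulAction

theorem MulAction.stabilizer_neg (G : Type*) {V : Type*} [Group G] [AddGroup V]
    [DistribMulAction G V] (x : V) : stabilizer G (-x) = stabilizer G x := by
  ext g
  simp only [mem_stabilizer_iff, smul_neg, neg_inj]

theorem DoubleCoset.doubleCoset_eq_of_smul_smul_eq {G X : Type*} [Group G] [MulAction G X]
    {H : Subgroup G} {x : X} {a b h : G} (hh : h ∈ H) (hx : h • b • x = a • x) :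
    DoubleCoset.doubleCoset a (H : Set G) (stabilizer G x)
      = DoubleCoset.doubleCoset b (H : Set G) (stabilizer G x) := by
  have hk : b⁻¹ * h⁻¹ * a ∈ stabilizer G x := by
    rw [mem_stabilizer_iff, mul_smul, mul_smul, ← hx, inv_smul_smul, inv_smul_smul]
  exact DoubleCoset.doubleCoset_eq_of_mem
    (DoubleCoset.mem_doubleCoset.mpr ⟨h, hh, _, hk, by group⟩)

theorem stmt_6_general (W : Type*) (V : Type*) [Group W] [AddCommGroup V]
    [DistribMulAction W V]
    (lam mu nu : V)
    (u u' q q' r r' w0 : W)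
    (hq : nu = q • (-lam - u • mu))
    (hq' : nu = q' • (-lam - u' • mu))
    (hr : r ∈ MulAction.stabilizer W lam)
    (hr' : r' ∈ MulAction.stabilizer W (-(w0 • nu)))
    (heq : r * q'⁻¹ * w0⁻¹ * r' = q⁻¹ * w0⁻¹) :
    DoubleCoset.doubleCoset u (MulAction.stabilizer W lam : Set W)
        (MulAction.stabilizer W mu : Set W)
      = DoubleCoset.doubleCoset u' (MulAction.stabilizer W lam : Set W)
          (MulAction.stabilizer W mu : Set W) := by
  rw [stabilizer_neg, mem_stabilizer_iff] at hr'
  have hact : r • (-lam - u' • mu) = -lam - u • mu := by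
    have := congrArg (· • w0 • nu) heq
    simp only [mul_smul, hr', inv_smul_smul] at this
    rwa [inv_smul_eq_iff.mpr hq', inv_smul_eq_iff.mpr hq] at this
  rw [smul_sub, smul_neg, mem_stabilizer_iff.mp hr] at hact
  exact DoubleCoset.doubleCoset_eq_of_smul_smul_eq hr (sub_right_injective hact)

/-- Let `W` be the Weyl group acting on the weight lattice, `λ, μ` dominant weights
(nonnegative against the positive coroots), `ν` a weight with
`ν = q(−λ−uμ) = q′(−λ−u′μ)`, and `w₀ ∈ W` the longest element.  If `r ∈ W_λ` and
`r′ ∈ W_{−w₀ν}` satisfy `r q′⁻¹ w₀⁻¹ r′ = q⁻¹ w₀⁻¹`, then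
`W_λ u W_μ = W_λ u′ W_μ` as double cosets. -/
theorem stmt_6 (W : Type*) (V : Type*) [Group W] [AddCommGroup V] [Module ℚ V]
    [DistribMulAction W V]
    (coroots : Finset (Module.Dual ℚ V))
    (lam mu nu : V)
    (hlam : ∀ c ∈ coroots, 0 ≤ c lam)
    (hmu : ∀ c ∈ coroots, 0 ≤ c mu)
    (u u' q q' r r' w0 : W)
    (hq : nu = q • (-lam - u • mu))
    (hq' : nu = q' • (-lam - u' • mu))
    (hr : r ∈ MulAction.stabilizer W lam)
    (hr' : r' ∈ MulAction.stabilizer W (-(w0 • nu)))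
    (heq : r * q'⁻¹ * w0⁻¹ * r' = q⁻¹ * w0⁻¹) :
    DoubleCoset.doubleCoset u (MulAction.stabilizer W lam : Set W)
        (MulAction.stabilizer W mu : Set W)
      = DoubleCoset.doubleCoset u' (MulAction.stabilizer W lam : Set W)
          (MulAction.stabilizer W mu : Set W) :=
  stmt_6_general W V lam mu nu u u' q q' r r' w0 hq hq' hr hr' heq
end

section
/- If λ, μ are dominant weights, u, u′ ∈ W, and r ∈ W_λ satisfies r(λ + u′μ) = λ + uμ, then r u′ μ = u μ and hence W_λ u′ W_μ = W_λ u W_μ. -/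
theorem smul_eq_of_mem_stabilizer_of_smul_add_eq {W V : Type*} [Group W] [AddLeftCancelMonoid V]
    [DistribMulAction W V] {r : W} {a x y : V} (hr : r ∈ MulAction.stabilizer W a)
    (h : r • (a + x) = a + y) : r • x = y := by
  rw [smul_add, MulAction.mem_stabilizer_iff.mp hr] at h
  exact add_left_cancel h

theorem doubleCoset_stabilizer_eq_of_smul_eq {W X : Type*} [Group W] [MulAction W X]
    {a b : X} {u u' r : W} (hr : r ∈ MulAction.stabilizer W a) (h : (r * u') • b = u • b) :
    DoubleCoset.doubleCoset u' (MulAction.stabilizer W a : Set W)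
        (MulAction.stabilizer W b : Set W)
      = DoubleCoset.doubleCoset u (MulAction.stabilizer W a : Set W)
          (MulAction.stabilizer W b : Set W) := by
  have hfix : u⁻¹ * (r * u') ∈ MulAction.stabilizer W b := by
    rw [MulAction.mem_stabilizer_iff, mul_smul, h, inv_smul_smul]
  -- `u′ = r⁻¹ * u * (u⁻¹ * (r * u′))`
  refine DoubleCoset.doubleCoset_eq_of_mem
    (DoubleCoset.mem_doubleCoset.mpr ⟨r⁻¹, inv_mem hr, u⁻¹ * (r * u'), hfix, ?_⟩)
  group

theorem stmt_7_general (W : Type*) (V : Type*) [Group W] [AddCommGroup V]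
    [DistribMulAction W V]
    (lam mu : V)
    (u u' r : W)
    (hr : r ∈ MulAction.stabilizer W lam)
    (h : r • (lam + u' • mu) = lam + u • mu) :
    (r * u') • mu = u • mu
    ∧ DoubleCoset.doubleCoset u' (MulAction.stabilizer W lam : Set W)
          (MulAction.stabilizer W mu : Set W)
        = DoubleCoset.doubleCoset u (MulAction.stabilizer W lam : Set W)
            (MulAction.stabilizer W mu : Set W) := by
  have hmu : (r * u') • mu = u • mu := by
    rw [mul_smul]
    exact smul_eq_of_mem_stabilizer_of_smul_add_eq hr h
  exact ⟨hmu, doubleCoset_stabilizer_eq_of_smul_eq hr hmu⟩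

/-- If `λ, μ` are dominant weights, `u, u′ ∈ W`, and `r ∈ W_λ` satisfies
`r(λ + u′μ) = λ + uμ`, then `r u′ μ = u μ` and hence
`W_λ u′ W_μ = W_λ u W_μ` as double cosets. -/
theorem stmt_7 (W : Type*) (V : Type*) [Group W] [AddCommGroup V] [Module ℚ V]
    [DistribMulAction W V]
    (coroots : Finset (Module.Dual ℚ V))
    (lam mu : V)
    (hlam : ∀ c ∈ coroots, 0 ≤ c lam)
    (hmu : ∀ c ∈ coroots, 0 ≤ c mu)
    (u u' r : W)
    (hr : r ∈ MulAction.stabilizer W lam)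
    (h : r • (lam + u' • mu) = lam + u • mu) :
    (r * u') • mu = u • mu
    ∧ DoubleCoset.doubleCoset u' (MulAction.stabilizer W lam : Set W)
          (MulAction.stabilizer W mu : Set W)
        = DoubleCoset.doubleCoset u (MulAction.stabilizer W lam : Set W)
            (MulAction.stabilizer W mu : Set W) :=
  stmt_7_general W V lam mu u u' r hr h
end

section
/- For a dominant weight ν and v ∈ W, we have ∑_{α≺0} max(0, ⟨α, −v⁻¹ν⟩) = ⟨ρ + v⁻¹ρ, v⁻¹ν⟩, where the sum runs over the negative roots α. -/
/-- For `ν` a dominant coweight (functional) and `v` a Weyl group element,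
`∑_{α ≺ 0} max(0, ⟨α, −v⁻¹ν⟩) = ⟨ρ + v⁻¹ρ, v⁻¹ν⟩`, where negative roots are the
`−β` for `β ∈ Φ⁺`, the coweight `v⁻¹ν` is `x ↦ ν(vx)`, and `2ρ = ∑_{β∈Φ⁺} β`. -/
theorem stmt_18 (V : Type*) [AddCommGroup V] [Module ℚ V]
    (Φpos : Finset V)
    (hdisj : ∀ α ∈ Φpos, -α ∉ Φpos)
    (ρ : V) (hρ : (2 : ℚ) • ρ = ∑ α ∈ Φpos, α)
    (v : V ≃ₗ[ℚ] V)
    (hv : ∀ α ∈ Φpos, v α ∈ Φpos ∨ -(v α) ∈ Φpos)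
    (hv' : ∀ α ∈ Φpos, v.symm α ∈ Φpos ∨ -(v.symm α) ∈ Φpos)
    (nu : Module.Dual ℚ V)
    (hnu : ∀ α ∈ Φpos, 0 ≤ nu α) :
    ∑ β ∈ Φpos, max 0 (-(nu (v (-β)))) = nu (v (ρ + v.symm ρ)) := by
  classical
  set f : V → V := fun β => if v β ∈ Φpos then v β else -(v β) with hf
  have key : ∑ β ∈ Φpos, |nu (v β)| = ∑ β ∈ Φpos, nu β := by
    refine Finset.sum_bij (fun β _ => f β) ?_ ?_ ?_ ?_
    · intro β hβ
      simp only [hf]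
      split_ifs with h
      · exact h
      · exact (hv β hβ).resolve_left h
    · intro β₁ h₁ β₂ h₂ heq
      simp only [hf] at heq
      split_ifs at heq with ha hb hb
      · exact v.injective heq
      · exfalso
        have : β₁ = -β₂ := by
          have : v β₁ = v (-β₂) := by rw [map_neg]; rw [heq]
          exact v.injective this
        subst this
        exact hdisj β₂ h₂ h₁
      · exfalso
        have : β₁ = -β₂ := by
          have : v β₁ = v (-β₂) := by
            rw [map_neg, ← heq, neg_neg]
          exact v.injective this
        subst this
        exact hdisj β₂ h₂ h₁
      · have : v β₁ = v β₂ := neg_injective heq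
        exact v.injective this
    · intro γ hγ
      rcases hv' γ hγ with h | h
      · refine ⟨v.symm γ, h, ?_⟩
        simp only [hf, LinearEquiv.apply_symm_apply]
        rw [if_pos hγ]
      · refine ⟨-(v.symm γ), h, ?_⟩
        simp only [hf, map_neg, LinearEquiv.apply_symm_apply]
        rw [if_neg, neg_neg]
        intro hc
        exact hdisj γ hγ hc
    · intro β hβ
      simp only [hf]
      split_ifs with h
      · exact abs_of_nonneg (hnu _ h)
      · have h' : -(v β) ∈ Φpos := (hv β hβ).resolve_left h
        have : nu (v β) ≤ 0 := by
          have := hnu _ h'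
          rw [map_neg] at this
          linarith
        rw [abs_of_nonpos this, map_neg]
  have hmax : ∀ x : ℚ, max 0 x = (x + |x|) / 2 := fun x => by
    rcases le_total 0 x with h | h
    · rw [max_eq_right h, abs_of_nonneg h]; ring
    · rw [max_eq_left h, abs_of_nonpos h]; ring
  have hsum1 : ∑ β ∈ Φpos, nu (v β) = 2 * nu (v ρ) := by
    rw [← map_sum, ← map_sum, ← hρ, map_smul, map_smul, smul_eq_mul]
  have hsum2 : ∑ β ∈ Φpos, nu β = 2 * nu ρ := by
    rw [← map_sum, ← hρ, map_smul, smul_eq_mul]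
  calc ∑ β ∈ Φpos, max 0 (-(nu (v (-β))))
      = ∑ β ∈ Φpos, (nu (v β) + |nu (v β)|) / 2 := by
        refine Finset.sum_congr rfl fun β _ => ?_
        rw [map_neg, map_neg, neg_neg, hmax]
    _ = ((∑ β ∈ Φpos, nu (v β)) + ∑ β ∈ Φpos, |nu (v β)|) / 2 := by
        rw [← Finset.sum_add_distrib, Finset.sum_div]
    _ = nu (v ρ) + nu ρ := by rw [key, hsum1, hsum2]; ring
    _ = nu (v (ρ + v.symm ρ)) := by
        rw [map_add, map_add, LinearEquiv.apply_symm_apply]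
end
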